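/- Let A be an n×n complex matrix with eigenpair (λ, x), x ≠ 0. Let S ⊊ N be nonempty, p ∈ S with |x_p| = max_{i∈S}|x_i|, q ∈ S̄ with |x_q| = max_{i∈S̄}|x_i|, and suppose |x_p| ≥ |x_q| > 0 and |λ - A p p| > r_p^S(A). Then (|λ - A p p| - r_p^S(A))(|λ - A q q| - r_q^{S̄}(A)) ≤ r_p^{S̄}(A) r_q^S(A). -/

import Mathlib

/-! Row `i` of `A x = λ x` gives `(λ - aᵢᵢ) xᵢ = ∑_{j ≠ i} aᵢⱼ xⱼ`. Bounding `|xⱼ|` by `|x_p|` on `S`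
and by `|x_q|` on `S̄` in rows `p` and `q` yields
`(|λ - a_pp| - r_p^S) |x_p| ≤ r_p^{S̄} |x_q|` and `(|λ - a_qq| - r_q^{S̄}) |x_q| ≤ r_q^S |x_p|`;
multiplying them and cancelling `|x_p| |x_q| > 0` gives the claim, the first factor being
nonnegative by hypothesis. -/

noncomputable def rT {n : ℕ} (A : Matrix (Fin n) (Fin n) ℂ) (T : Finset (Fin n))
    (i : Fin n) : ℝ :=
  ∑ j ∈ T.erase i, ‖A i j‖

open Finset

theorem Matrix.sub_diag_mul_eq_sum_erase {ι R : Type*} [Fintype ι] [DecidableEq ι] [CommRing R]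
    (A : Matrix ι ι R) {lam : R} {x : ι → R} (heig : A.mulVec x = lam • x) (i : ι) :
    (lam - A i i) * x i = ∑ j ∈ univ.erase i, A i j * x j := by
  have hrow := congrFun heig i
  rw [Matrix.mulVec, dotProduct, ← add_sum_erase _ _ (mem_univ i)] at hrow
  simp only [Pi.smul_apply, smul_eq_mul] at hrow
  linear_combination -hrow

theorem Matrix.norm_sub_diag_mul_le_sum_erase {ι 𝕜 : Type*} [Fintype ι] [DecidableEq ι]
    [NormedField 𝕜] (A : Matrix ι ι 𝕜) {lam : 𝕜} {x : ι → 𝕜} (heig : A.mulVec x = lam • x)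
    (i : ι) : ‖lam - A i i‖ * ‖x i‖ ≤ ∑ j ∈ univ.erase i, ‖A i j‖ * ‖x j‖ := by
  rw [← norm_mul, A.sub_diag_mul_eq_sum_erase heig i]
  exact (norm_sum_le _ _).trans_eq (by simp only [norm_mul])

theorem rT_nonneg {n : ℕ} (A : Matrix (Fin n) (Fin n) ℂ) (T : Finset (Fin n)) (i : Fin n) :
    0 ≤ rT A T i :=
  sum_nonneg fun _ _ => norm_nonneg _

theorem sum_erase_norm_mul_le_rT_mul {n : ℕ} (A : Matrix (Fin n) (Fin n) ℂ) (T : Finset (Fin n))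
    (i : Fin n) {x : Fin n → ℂ} {m : ℝ} (hm : ∀ j ∈ T, ‖x j‖ ≤ m) :
    ∑ j ∈ T.erase i, ‖A i j‖ * ‖x j‖ ≤ rT A T i * m := by
  rw [rT, sum_mul]
  exact sum_le_sum fun j hj =>
    mul_le_mul_of_nonneg_left (hm j (mem_of_mem_erase hj)) (norm_nonneg _)

theorem norm_sub_diag_mul_le_rT {n : ℕ} (A : Matrix (Fin n) (Fin n) ℂ) {lam : ℂ}
    {x : Fin n → ℂ} (heig : A.mulVec x = lam • x) (T : Finset (Fin n)) (i : Fin n) {mT mC : ℝ}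
    (hmT : ∀ j ∈ T, ‖x j‖ ≤ mT) (hmC : ∀ j ∈ Tᶜ, ‖x j‖ ≤ mC) :
    ‖lam - A i i‖ * ‖x i‖ ≤ rT A T i * mT + rT A Tᶜ i * mC := by
  have hsplit : univ.erase i = T.erase i ∪ Tᶜ.erase i := by
    rw [← erase_union_distrib, union_compl]
  have hdisj : Disjoint (T.erase i) (Tᶜ.erase i) :=
    disjoint_compl_right.mono (erase_subset _ _) (erase_subset _ _)
  calc ‖lam - A i i‖ * ‖x i‖ ≤ ∑ j ∈ univ.erase i, ‖A i j‖ * ‖x j‖ :=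
        A.norm_sub_diag_mul_le_sum_erase heig i
    _ = ∑ j ∈ T.erase i, ‖A i j‖ * ‖x j‖ + ∑ j ∈ Tᶜ.erase i, ‖A i j‖ * ‖x j‖ := by
        rw [hsplit, sum_union hdisj]
    _ ≤ rT A T i * mT + rT A Tᶜ i * mC :=
        add_le_add (sum_erase_norm_mul_le_rT_mul A T i hmT)
          (sum_erase_norm_mul_le_rT_mul A Tᶜ i hmC)

theorem mul_le_mul_of_mul_le_of_mul_le {a b c d u v : ℝ} (ha : 0 ≤ a) (hc : 0 ≤ c) (hd : 0 ≤ d)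
    (hu : 0 < u) (hv : 0 < v) (hau : a * u ≤ c * v) (hbv : b * v ≤ d * u) :
    a * b ≤ c * d := by
  rcases le_or_gt b 0 with hb | hb
  · exact (mul_nonpos_of_nonneg_of_nonpos ha hb).trans (mul_nonneg hc hd)
  · have hprod : a * b * (u * v) ≤ c * d * (u * v) :=
      calc a * b * (u * v) = (a * u) * (b * v) := by ring
        _ ≤ (c * v) * (d * u) := mul_le_mul hau hbv (by positivity) (by positivity)
        _ = c * d * (u * v) := by ring
    exact le_of_mul_le_mul_right hprod (mul_pos hu hv)

theorem stmt_17_general {n : ℕ} (A : Matrix (Fin n) (Fin n) ℂ)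
    (S : Finset (Fin n))
    (lam : ℂ) (x : Fin n → ℂ) (heig : A.mulVec x = lam • x)
    (p q : Fin n)
    (hpmax : ∀ i ∈ S, ‖x i‖ ≤ ‖x p‖)
    (hqmax : ∀ i ∈ Sᶜ, ‖x i‖ ≤ ‖x q‖)
    (hq0 : 0 < ‖x q‖) (hpq : ‖x q‖ ≤ ‖x p‖)
    (hgt : rT A S p < ‖lam - A p p‖) :
    (‖lam - A p p‖ - rT A S p) * (‖lam - A q q‖ - rT A Sᶜ q) ≤
      rT A Sᶜ p * rT A S q := by
  have hrow_p := norm_sub_diag_mul_le_rT A heig S p hpmax hqmax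
  have hrow_q := norm_sub_diag_mul_le_rT A heig Sᶜ q hqmax (by rwa [compl_compl])
  rw [compl_compl] at hrow_q
  exact mul_le_mul_of_mul_le_of_mul_le (sub_nonneg.2 hgt.le) (rT_nonneg A Sᶜ p)
    (rT_nonneg A S q) (hq0.trans_le hpq) hq0 (by linarith) (by linarith)

theorem stmt_17 {n : ℕ} (A : Matrix (Fin n) (Fin n) ℂ)
    (S : Finset (Fin n)) (hS : S.Nonempty) (hSc : Sᶜ.Nonempty)
    (lam : ℂ) (x : Fin n → ℂ) (hx : x ≠ 0) (heig : A.mulVec x = lam • x)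
    (p q : Fin n) (hp : p ∈ S) (hq : q ∈ Sᶜ)
    (hpmax : ∀ i ∈ S, ‖x i‖ ≤ ‖x p‖)
    (hqmax : ∀ i ∈ Sᶜ, ‖x i‖ ≤ ‖x q‖)
    (hq0 : 0 < ‖x q‖) (hpq : ‖x q‖ ≤ ‖x p‖)
    (hgt : rT A S p < ‖lam - A p p‖) :
    (‖lam - A p p‖ - rT A S p) * (‖lam - A q q‖ - rT A Sᶜ q) ≤
      rT A Sᶜ p * rT A S q :=
  stmt_17_general A S lam x heig p q hpmax hqmax hq0 hpq hgt
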